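/- arXiv:2007.00427 — 2 statements merged into one kernel-verified Lean document; each statement's English description precedes it below -/
import Mathlib

section
/- Let P, Q, R be symmetric positive definite matrices (of sizes n×n, n×n, m×m respectively), K ∈ ℝ^{m×n}, A ∈ ℝ^{n×n}, B ∈ ℝ^{n×m}, and suppose P ≥ (A+BK)ᵀP(A+BK) + Q + KᵀRK. Then for any β > 0 and any equilibrium point x_e satisfying x_e = (A+BK)x_e + Bd (i.e., (A+BK)x_e + Bd = x_e), the ellipsoid E(x_e, β) = {x : (x−x_e)ᵀP(x−x_e) ≤ β} is positively invariant under the dynamics x⁺ = Ax + B(Kx + d): if x ∈ E(x_e, β) then x⁺ ∈ E(x_e, β). -/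
open Matrix

/-!
In error coordinates `y = x - x_e` the affine closed loop becomes the linear map
`y ↦ (A + B K) y`. The Lyapunov inequality, with the positive semidefinite term `Q + Kᵀ R K`
dropped, says that this map does not increase the quadratic form of `P`, so every sublevel set
of `y ↦ yᵀ P y` is mapped into itself.
-/

namespace Matrix

variable {ι κ μ R : Type*} [Fintype ι] [Fintype κ] [Fintype μ]

lemma mulVec_add_mulVec_sub_eq_mulVec_sub [CommRing R]
    {A : Matrix ι ι R} {B : Matrix ι μ R} {K : Matrix μ ι R} {d : μ → R} {xₑ : ι → R}
    (heq : (A + B * K) *ᵥ xₑ + B *ᵥ d = xₑ) (x : ι → R) :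
    A *ᵥ x + B *ᵥ (K *ᵥ x + d) - xₑ = (A + B * K) *ᵥ (x - xₑ) := by
  conv_lhs => rw [← heq]
  simp only [mulVec_add, mulVec_sub, add_mulVec, mulVec_mulVec]
  abel

lemma dotProduct_transpose_mul_mul_mulVec [CommSemiring R]
    (M : Matrix ι κ R) (N : Matrix ι ι R) (v : κ → R) :
    v ⬝ᵥ (Mᵀ * N * M) *ᵥ v = M *ᵥ v ⬝ᵥ N *ᵥ (M *ᵥ v) := by
  rw [Matrix.mul_assoc, ← mulVec_mulVec, ← mulVec_mulVec, dotProduct_mulVec, vecMul_transpose]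

variable [CommRing R] [PartialOrder R] [IsOrderedAddMonoid R] [StarRing R] [TrivialStar R]

lemma PosSemidef.dotProduct_mulVec_le_of_sub {P X : Matrix ι ι R} (h : (P - X).PosSemidef)
    (v : ι → R) : v ⬝ᵥ X *ᵥ v ≤ v ⬝ᵥ P *ᵥ v := by
  have := h.dotProduct_mulVec_nonneg v
  rwa [star_trivial, sub_mulVec, dotProduct_sub, sub_nonneg] at this

lemma dotProduct_mulVec_mulVec_le_of_lyapunov {P S M : Matrix ι ι R}
    (hLyap : (P - (Mᵀ * P * M + S)).PosSemidef) (hS : S.PosSemidef) (v : ι → R) :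
    M *ᵥ v ⬝ᵥ P *ᵥ (M *ᵥ v) ≤ v ⬝ᵥ P *ᵥ v := by
  have hdecrease : (P - Mᵀ * P * M).PosSemidef := by
    simpa only [sub_add_cancel, sub_add_eq_sub_sub] using hLyap.add hS
  rw [← dotProduct_transpose_mul_mul_mulVec]
  exact hdecrease.dotProduct_mulVec_le_of_sub v

end Matrix

theorem ellipsoid_positively_invariant_general {n m : ℕ}
    (A P Q : Matrix (Fin n) (Fin n) ℝ) (B : Matrix (Fin n) (Fin m) ℝ)
    (K : Matrix (Fin m) (Fin n) ℝ) (R : Matrix (Fin m) (Fin m) ℝ)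
    (hQ : Q.PosDef) (hR : R.PosDef)
    (hLyap : (P - ((A + B * K)ᵀ * P * (A + B * K) + Q + Kᵀ * R * K)).PosSemidef)
    (β : ℝ) (x_e : Fin n → ℝ) (d : Fin m → ℝ)
    (heq : (A + B * K).mulVec x_e + B.mulVec d = x_e)
    (x : Fin n → ℝ) (hx : (x - x_e) ⬝ᵥ P.mulVec (x - x_e) ≤ β) :
    ((A.mulVec x + B.mulVec (K.mulVec x + d)) - x_e) ⬝ᵥ
      P.mulVec ((A.mulVec x + B.mulVec (K.mulVec x + d)) - x_e) ≤ β := by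
  have hcost : (Q + Kᵀ * R * K).PosSemidef := by
    simpa only [conjTranspose_eq_transpose_of_trivial] using
      hQ.posSemidef.add (hR.posSemidef.conjTranspose_mul_mul_same K)
  rw [add_assoc] at hLyap
  rw [mulVec_add_mulVec_sub_eq_mulVec_sub heq]
  exact (dotProduct_mulVec_mulVec_le_of_lyapunov hLyap hcost (x - x_e)).trans hx

theorem ellipsoid_positively_invariant {n m : ℕ}
    (A P Q : Matrix (Fin n) (Fin n) ℝ) (B : Matrix (Fin n) (Fin m) ℝ)
    (K : Matrix (Fin m) (Fin n) ℝ) (R : Matrix (Fin m) (Fin m) ℝ)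
    (hP : P.PosDef) (hQ : Q.PosDef) (hR : R.PosDef)
    (hLyap : (P - ((A + B * K)ᵀ * P * (A + B * K) + Q + Kᵀ * R * K)).PosSemidef)
    (β : ℝ) (hβ : 0 < β) (x_e : Fin n → ℝ) (d : Fin m → ℝ)
    (heq : (A + B * K).mulVec x_e + B.mulVec d = x_e)
    (x : Fin n → ℝ) (hx : (x - x_e) ⬝ᵥ P.mulVec (x - x_e) ≤ β) :
    ((A.mulVec x + B.mulVec (K.mulVec x + d)) - x_e) ⬝ᵥ
      P.mulVec ((A.mulVec x + B.mulVec (K.mulVec x + d)) - x_e) ≤ β :=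
  ellipsoid_positively_invariant_general A P Q B K R hQ hR hLyap β x_e d heq x hx
end

section
/- Let P be symmetric positive definite on ℝⁿ and let M ∈ ℝ^{n×p}, v ∈ ℝⁿ, and ρⱼ ≥ 0, Pⱼ symmetric positive semidefinite matrices on ℝᵖ for j in a finite index set N, and α > 0. If the block matrix [[P⁻¹α^{1/2}, M, v],[Mᵀ, Σⱼ ρⱼPⱼ, 0],[vᵀ, 0, α^{1/2} − Σⱼρⱼ]] is positive semidefinite, then (Ms + v)ᵀP(Ms + v) ≤ α for every s ∈ ℝᵖ with sᵀPⱼs ≤ 1 for all j ∈ N. -/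
/-!
Write `W = [M v]` and `y = (s, 1)`, so that `W y = M s + v`. Taking the Schur complement of the
positive definite block `√α P⁻¹` in the LMI gives `(W y)ᵀ P (W y) ≤ √α · yᵀ D y`, where `D` is the
lower right block, i.e. `(M s + v)ᵀ P (M s + v) ≤ √α (sᵀ (∑ ρⱼ Pⱼ) s + √α - ∑ ρⱼ)`. On the
intersection of the ellipsoids, `sᵀ (∑ ρⱼ Pⱼ) s ≤ ∑ ρⱼ` since `ρ ≥ 0` (the S-procedure), and the
right-hand side is at most `√α · √α = α`.
-/

open Matrix

namespace Matrix

theorem PosDef.dotProduct_mulVec_inv_le_of_fromBlocks {m k : Type*} [Fintype m]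
    [DecidableEq m] [Fintype k] {A : Matrix m m ℝ} (hA : A.PosDef) {B : Matrix m k ℝ}
    {D : Matrix k k ℝ} (h : (fromBlocks A B Bᵀ D).PosSemidef) (y : k → ℝ) :
    (B *ᵥ y) ⬝ᵥ A⁻¹ *ᵥ (B *ᵥ y) ≤ y ⬝ᵥ D *ᵥ y := by
  let := hA.isUnit.invertible
  have hS := (PosDef.fromBlocks₁₁ B D hA).mp (by rwa [conjTranspose_eq_transpose_of_trivial])
  have hquad := hS.dotProduct_mulVec_nonneg y
  rw [conjTranspose_eq_transpose_of_trivial, star_trivial, sub_mulVec, dotProduct_sub,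
    ← mulVec_mulVec, ← mulVec_mulVec, dotProduct_mulVec y Bᵀ, vecMul_transpose] at hquad
  linarith

theorem dotProduct_sum_smul_mulVec_le {ι m R : Type*} [Fintype ι] [Fintype m] [CommSemiring R]
    [PartialOrder R] [IsOrderedRing R] (Q : ι → Matrix m m R) {ρ : ι → R} (hρ : ∀ j, 0 ≤ ρ j)
    {s : m → R} (hs : ∀ j, s ⬝ᵥ Q j *ᵥ s ≤ 1) : s ⬝ᵥ (∑ j, ρ j • Q j) *ᵥ s ≤ ∑ j, ρ j := by
  simp only [sum_mulVec, smul_mulVec, dotProduct_sum, dotProduct_smul, smul_eq_mul]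
  exact Finset.sum_le_sum fun j _ => mul_le_of_le_one_right (hρ j) (hs j)

theorem fromCols_replicateCol_mulVec_sumElim_one {m k R : Type*} [Fintype k] [Semiring R]
    (M : Matrix m k R) (v : m → R) (s : k → R) :
    fromCols M (replicateCol (Fin 1) v) *ᵥ Sum.elim s (fun _ => 1) = M *ᵥ s + v := by
  ext i
  simp [mulVec, dotProduct]

theorem sumElim_one_dotProduct_fromBlocks_mulVec {k R : Type*} [Fintype k] [Semiring R]
    (Q : Matrix k k R) (c : R) (s : k → R) :
    Sum.elim s (fun _ => 1) ⬝ᵥ fromBlocks Q 0 0 (of fun _ _ => c : Matrix (Fin 1) (Fin 1) R) *ᵥ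
      Sum.elim s (fun _ => 1) = s ⬝ᵥ Q *ᵥ s + c := by
  simp [mulVec, dotProduct]

theorem smul_inv_inv {m K : Type*} [Fintype m] [DecidableEq m] [Field K]
    {A : Matrix m m K} (hA : IsUnit A) {c : K} (hc : c ≠ 0) : (c • A⁻¹)⁻¹ = c⁻¹ • A := by
  refine inv_eq_left_inv ?_
  rw [smul_mul_smul, inv_mul_cancel₀ hc, one_smul,
    mul_nonsing_inv _ ((isUnit_iff_isUnit_det A).mp hA)]

end Matrix

theorem terminal_invariance_lmi_implies_robust_constraint_general {n p r : ℕ}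
    (P : Matrix (Fin n) (Fin n) ℝ) (hP : P.PosDef)
    (M : Matrix (Fin n) (Fin p) ℝ) (v : Fin n → ℝ)
    (Pm : Fin r → Matrix (Fin p) (Fin p) ℝ)
    (ρ : Fin r → ℝ) (hρ : ∀ j, 0 ≤ ρ j) (α : ℝ) (hα : 0 < α)
    (hLMI : (Matrix.fromBlocks (Real.sqrt α • P⁻¹)
        (Matrix.of fun i (j : Fin p ⊕ Fin 1) =>
          Sum.elim (fun jp => M i jp) (fun _ => v i) j)
        (Matrix.of fun (j : Fin p ⊕ Fin 1) i =>
          Sum.elim (fun jp => M i jp) (fun _ => v i) j)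
        (Matrix.fromBlocks (∑ j, ρ j • Pm j) 0 0
          (Matrix.of fun _ _ => Real.sqrt α - ∑ j, ρ j))).PosSemidef) :
    ∀ s : Fin p → ℝ, (∀ j, s ⬝ᵥ (Pm j).mulVec s ≤ 1) →
      (M.mulVec s + v) ⬝ᵥ P.mulVec (M.mulVec s + v) ≤ α := by
  intro s hs
  have hsα : 0 < √α := Real.sqrt_pos.mpr hα
  have hA : (√α • P⁻¹).PosDef := hP.inv.smul hsα
  -- the off-diagonal blocks of `hLMI` are `[M v]` and its transpose up to unfolding
  have hSchur := hA.dotProduct_mulVec_inv_le_of_fromBlocks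
    (B := fromCols M (replicateCol (Fin 1) v)) hLMI (Sum.elim s fun _ => 1)
  rw [fromCols_replicateCol_mulVec_sumElim_one, sumElim_one_dotProduct_fromBlocks_mulVec,
    smul_inv_inv hP.isUnit hsα.ne', smul_mulVec, dotProduct_smul, smul_eq_mul] at hSchur
  have hSproc := dotProduct_sum_smul_mulVec_le Pm hρ hs
  calc (M *ᵥ s + v) ⬝ᵥ P *ᵥ (M *ᵥ s + v)
      ≤ √α * (s ⬝ᵥ (∑ j, ρ j • Pm j) *ᵥ s + (√α - ∑ j, ρ j)) := by
        rwa [inv_mul_le_iff₀ hsα] at hSchur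
    _ ≤ √α * √α := by gcongr; linarith
    _ = α := Real.mul_self_sqrt hα.le

theorem terminal_invariance_lmi_implies_robust_constraint {n p r : ℕ}
    (P : Matrix (Fin n) (Fin n) ℝ) (hP : P.PosDef)
    (M : Matrix (Fin n) (Fin p) ℝ) (v : Fin n → ℝ)
    (Pm : Fin r → Matrix (Fin p) (Fin p) ℝ) (hPm : ∀ j, (Pm j).PosSemidef)
    (ρ : Fin r → ℝ) (hρ : ∀ j, 0 ≤ ρ j) (α : ℝ) (hα : 0 < α)
    (hLMI : (Matrix.fromBlocks (Real.sqrt α • P⁻¹)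
        (Matrix.of fun i (j : Fin p ⊕ Fin 1) =>
          Sum.elim (fun jp => M i jp) (fun _ => v i) j)
        (Matrix.of fun (j : Fin p ⊕ Fin 1) i =>
          Sum.elim (fun jp => M i jp) (fun _ => v i) j)
        (Matrix.fromBlocks (∑ j, ρ j • Pm j) 0 0
          (Matrix.of fun _ _ => Real.sqrt α - ∑ j, ρ j))).PosSemidef) :
    ∀ s : Fin p → ℝ, (∀ j, s ⬝ᵥ (Pm j).mulVec s ≤ 1) →
      (M.mulVec s + v) ⬝ᵥ P.mulVec (M.mulVec s + v) ≤ α :=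
  terminal_invariance_lmi_implies_robust_constraint_general P hP M v Pm ρ hρ α hα hLMI
end
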